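/- The maps λ ↦ t⁻(λ) and λ ↦ t⁺(λ) are continuous on (0, Λ(A,B)), and t⁻(λ) → T(A,B) and t⁺(λ) → T(A,B) as λ ↑ Λ(A,B). -/

import Mathlib

/-!
For `t > 0` one has `ψ_λ'(t) = A² t³ (λ - φ(t))` with `φ = lamCrit`,
`φ(t) = (B t^(γ-2) - aA) / (A² t²)`, so the critical points of `ψ_λ` are the solutions of
`φ(t) = λ`. The function `φ` increases strictly on `(0, T]`, decreases strictly on `[T, ∞)` and
`φ(T) = Λ`; hence `t⁻ < T < t⁺`, and `t⁻`, `t⁺` are right inverses of the two monotone branches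
of `φ`. A right inverse of a strictly monotone function is squeezed between preimages of nearby
levels, which gives continuity inside `(0, Λ)`; at `Λ = φ(T)` both branches are squeezed to `T`.
-/

open Real Set Filter

/-- Fiber map `ψ_λ(t) = (a/2)·A·t² + (λ/4)·A²·t⁴ − (1/γ)·B·t^γ`. -/
noncomputable def psi (a γ A B lam t : ℝ) : ℝ :=
  a / 2 * A * t ^ 2 + lam / 4 * A ^ 2 * t ^ 4 - 1 / γ * B * t ^ γ

/-- The constant `C_{a,γ} = a·((γ−2)/(4−γ))·((4−γ)/(2a))^(2/(γ−2))`. -/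
noncomputable def Cag (a γ : ℝ) : ℝ :=
  a * ((γ - 2) / (4 - γ)) * ((4 - γ) / (2 * a)) ^ (2 / (γ - 2))

/-- The extremal value `Λ(A,B) = C_{a,γ}·B^(2/(γ−2))·A^(−γ/(γ−2))`. -/
noncomputable def Lam (a γ A B : ℝ) : ℝ :=
  Cag a γ * B ^ (2 / (γ - 2)) * A ^ (-(γ / (γ - 2)))

/-- `T(A,B) = (2aA/((4−γ)B))^(1/(γ−2))`. -/
noncomputable def Tab (a γ A B : ℝ) : ℝ :=
  (2 * a * A / ((4 - γ) * B)) ^ (1 / (γ - 2))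

open Topology

section RightInverse

variable {α β : Type*} [LinearOrder α] [LinearOrder β]
  {f : α → β} {g : β → α} {s : Set α} {U : Set β}

theorem StrictMonoOn.lt_rightInvOn (hf : StrictMonoOn f s)
    (hg : ∀ μ ∈ U, g μ ∈ s ∧ f (g μ) = μ) {μ : β} (hμ : μ ∈ U) {t : α} (ht : t ∈ s)
    (hlt : f t < μ) : t < g μ :=
  (hf.lt_iff_lt ht (hg μ hμ).1).1 (hlt.trans_eq (hg μ hμ).2.symm)

theorem StrictMonoOn.rightInvOn_lt (hf : StrictMonoOn f s)
    (hg : ∀ μ ∈ U, g μ ∈ s ∧ f (g μ) = μ) {μ : β} (hμ : μ ∈ U) {t : α} (ht : t ∈ s)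
    (hlt : μ < f t) : g μ < t :=
  (hf.lt_iff_lt (hg μ hμ).1 ht).1 ((hg μ hμ).2.trans_lt hlt)

variable [TopologicalSpace α] [OrderTopology α] [TopologicalSpace β] [OrderTopology β]

theorem StrictMonoOn.continuousWithinAt_of_rightInvOn (hf : StrictMonoOn f s)
    (hs : s.OrdConnected) (hg : ∀ μ ∈ U, g μ ∈ s ∧ f (g μ) = μ) {μ₀ : β} (hμ₀ : μ₀ ∈ U)
    (hbelow : ∃ t ∈ s, t < g μ₀) (habove : ∃ t ∈ s, g μ₀ < t) :
    ContinuousWithinAt g U μ₀ := by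
  obtain ⟨hg₀, hfg₀⟩ := hg μ₀ hμ₀
  refine tendsto_order.2 ⟨fun a ha => ?_, fun a ha => ?_⟩
  · obtain ⟨t, hts, htg⟩ := hbelow
    have hmem : max a t ∈ s := hs.out hts hg₀ ⟨le_max_right _ _, (max_lt ha htg).le⟩
    have hf_lt : f (max a t) < μ₀ := (hf hmem hg₀ (max_lt ha htg)).trans_eq hfg₀
    filter_upwards [self_mem_nhdsWithin, nhdsWithin_le_nhds (Ioi_mem_nhds hf_lt)] with μ hμ hμ'
    exact (le_max_left _ _).trans_lt (hf.lt_rightInvOn hg hμ hmem hμ')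
  · obtain ⟨t, hts, hgt⟩ := habove
    have hmem : min a t ∈ s := hs.out hg₀ hts ⟨(lt_min ha hgt).le, min_le_right _ _⟩
    have hlt_f : μ₀ < f (min a t) := hfg₀.symm.trans_lt (hf hg₀ hmem (lt_min ha hgt))
    filter_upwards [self_mem_nhdsWithin, nhdsWithin_le_nhds (Iio_mem_nhds hlt_f)] with μ hμ hμ'
    exact (hf.rightInvOn_lt hg hμ hmem hμ').trans_le (min_le_left _ _)

theorem StrictMonoOn.tendsto_rightInvOn_of_isGreatest (hf : StrictMonoOn f s)
    (hs : s.OrdConnected) (hg : ∀ μ ∈ U, g μ ∈ s ∧ f (g μ) = μ) {T : α} (hT : IsGreatest s T)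
    (hbelow : ∃ t ∈ s, t < T) : Tendsto g (𝓝[U] f T) (𝓝 T) := by
  refine tendsto_order.2 ⟨fun a ha => ?_, fun a ha => ?_⟩
  · obtain ⟨t, hts, htT⟩ := hbelow
    have hmem : max a t ∈ s := hs.out hts hT.1 ⟨le_max_right _ _, (max_lt ha htT).le⟩
    filter_upwards [self_mem_nhdsWithin,
      nhdsWithin_le_nhds (Ioi_mem_nhds (hf hmem hT.1 (max_lt ha htT)))] with μ hμ hμ'
    exact (le_max_left _ _).trans_lt (hf.lt_rightInvOn hg hμ hmem hμ')
  · filter_upwards [self_mem_nhdsWithin] with μ hμ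
    exact (hT.2 (hg μ hμ).1).trans_lt ha

theorem StrictAntiOn.continuousWithinAt_of_rightInvOn (hf : StrictAntiOn f s)
    (hs : s.OrdConnected) (hg : ∀ μ ∈ U, g μ ∈ s ∧ f (g μ) = μ) {μ₀ : β} (hμ₀ : μ₀ ∈ U)
    (hbelow : ∃ t ∈ s, t < g μ₀) (habove : ∃ t ∈ s, g μ₀ < t) :
    ContinuousWithinAt g U μ₀ :=
  hf.dual_left.continuousWithinAt_of_rightInvOn (α := αᵒᵈ) hs.dual hg hμ₀ habove hbelow

theorem StrictAntiOn.tendsto_rightInvOn_of_isLeast (hf : StrictAntiOn f s)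
    (hs : s.OrdConnected) (hg : ∀ μ ∈ U, g μ ∈ s ∧ f (g μ) = μ) {T : α} (hT : IsLeast s T)
    (habove : ∃ t ∈ s, T < t) : Tendsto g (𝓝[U] f T) (𝓝 T) :=
  hf.dual_left.tendsto_rightInvOn_of_isGreatest (α := αᵒᵈ) hs.dual hg hT habove

end RightInverse

noncomputable def lamCrit (a γ A B t : ℝ) : ℝ :=
  (B * t ^ (γ - 2) - a * A) / (A ^ 2 * t ^ 2)

theorem hasDerivAt_psi (a A B lam : ℝ) {γ t : ℝ} (hγ : γ ≠ 0) (hA : A ≠ 0) (ht : 0 < t) :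
    HasDerivAt (psi a γ A B lam) (A ^ 2 * t ^ 3 * (lam - lamCrit a γ A B t)) t := by
  have h : HasDerivAt (psi a γ A B lam) _ t := (((hasDerivAt_pow 2 t).const_mul (a / 2 * A)).add
    ((hasDerivAt_pow 4 t).const_mul (lam / 4 * A ^ 2))).sub
    ((Real.hasDerivAt_rpow_const (p := γ) (Or.inl ht.ne')).const_mul (1 / γ * B))
  have e : t ^ (γ - 1) = t ^ (γ - 2) * t := by
    rw [← Real.rpow_add_one ht.ne']; ring_nf
  convert h using 1
  rw [lamCrit, e]
  field_simp
  ring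

theorem deriv_psi_eq_zero_iff (a A B lam : ℝ) {γ t : ℝ} (hγ : γ ≠ 0) (hA : A ≠ 0)
    (ht : 0 < t) : deriv (psi a γ A B lam) t = 0 ↔ lamCrit a γ A B t = lam := by
  rw [(hasDerivAt_psi a A B lam hγ hA ht).deriv]
  simp [hA, ht.ne', sub_eq_zero, eq_comm]

theorem hasDerivAt_lamCrit (a γ B : ℝ) {A t : ℝ} (hA : A ≠ 0) (ht : 0 < t) :
    HasDerivAt (lamCrit a γ A B)
      ((2 * a * A - (4 - γ) * B * t ^ (γ - 2)) / (A ^ 2 * t ^ 3)) t := by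
  have h : HasDerivAt (lamCrit a γ A B) _ t :=
    (((Real.hasDerivAt_rpow_const (p := γ - 2) (Or.inl ht.ne')).const_mul B).sub_const
      (a * A)).div ((hasDerivAt_pow 2 t).const_mul (A ^ 2)) (by positivity)
  have e : t ^ (γ - 2 - 1) * t = t ^ (γ - 2) := by
    rw [← Real.rpow_add_one ht.ne']; ring_nf
  convert h using 1
  field_simp
  rw [← e]
  ring

theorem Tab_pos {a γ A B : ℝ} (ha : 0 < a) (hγ4 : γ < 4) (hA : 0 < A) (hB : 0 < B) :
    0 < Tab a γ A B :=
  Real.rpow_pos_of_pos (div_pos (by positivity) (mul_pos (by linarith) hB)) _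

theorem Tab_rpow_sub_two {a γ A B : ℝ} (ha : 0 < a) (hγ2 : 2 < γ) (hγ4 : γ < 4) (hA : 0 < A)
    (hB : 0 < B) : Tab a γ A B ^ (γ - 2) = 2 * a * A / ((4 - γ) * B) := by
  rw [Tab, ← Real.rpow_mul (div_pos (by positivity) (mul_pos (by linarith) hB)).le,
    one_div_mul_cancel (by linarith), Real.rpow_one]

theorem deriv_lamCrit {a γ A B t : ℝ} (ha : 0 < a) (hγ2 : 2 < γ) (hγ4 : γ < 4) (hA : 0 < A)
    (hB : 0 < B) (ht : 0 < t) :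
    deriv (lamCrit a γ A B) t =
      (4 - γ) * B * (Tab a γ A B ^ (γ - 2) - t ^ (γ - 2)) / (A ^ 2 * t ^ 3) := by
  rw [(hasDerivAt_lamCrit a γ B hA.ne' ht).deriv, Tab_rpow_sub_two ha hγ2 hγ4 hA hB]
  field_simp [(by linarith : (4 - γ) ≠ 0)]

theorem lamCrit_continuousOn (a γ B : ℝ) {A : ℝ} (hA : A ≠ 0) :
    ContinuousOn (lamCrit a γ A B) (Ioi 0) :=
  fun _ ht => (hasDerivAt_lamCrit a γ B hA ht).continuousAt.continuousWithinAt

theorem lamCrit_strictMonoOn {a γ A B : ℝ} (ha : 0 < a) (hγ2 : 2 < γ) (hγ4 : γ < 4)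
    (hA : 0 < A) (hB : 0 < B) : StrictMonoOn (lamCrit a γ A B) (Ioc 0 (Tab a γ A B)) := by
  refine strictMonoOn_of_deriv_pos (convex_Ioc _ _)
    ((lamCrit_continuousOn a γ B hA.ne').mono Ioc_subset_Ioi_self) fun t ht => ?_
  rw [interior_Ioc] at ht
  have hlt : t ^ (γ - 2) < Tab a γ A B ^ (γ - 2) := Real.rpow_lt_rpow ht.1.le ht.2 (by linarith)
  have ht0 : 0 < t := ht.1
  rw [deriv_lamCrit ha hγ2 hγ4 hA hB ht0]
  exact div_pos (mul_pos (mul_pos (by linarith) hB) (by linarith)) (by positivity)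

theorem lamCrit_strictAntiOn {a γ A B : ℝ} (ha : 0 < a) (hγ2 : 2 < γ) (hγ4 : γ < 4)
    (hA : 0 < A) (hB : 0 < B) : StrictAntiOn (lamCrit a γ A B) (Ici (Tab a γ A B)) := by
  have hT := Tab_pos ha hγ4 hA hB
  refine strictAntiOn_of_deriv_neg (convex_Ici _)
    ((lamCrit_continuousOn a γ B hA.ne').mono fun t ht => hT.trans_le ht) fun t ht => ?_
  rw [interior_Ici] at ht
  have ht0 : 0 < t := hT.trans ht
  have hlt : Tab a γ A B ^ (γ - 2) < t ^ (γ - 2) := Real.rpow_lt_rpow hT.le ht (by linarith)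
  rw [deriv_lamCrit ha hγ2 hγ4 hA hB ht0]
  refine div_neg_of_neg_of_pos (mul_neg_of_pos_of_neg (mul_pos (by linarith) hB) ?_) (by positivity)
  linarith

theorem lamCrit_Tab {a γ A B : ℝ} (ha : 0 < a) (hγ2 : 2 < γ) (hγ4 : γ < 4) (hA : 0 < A)
    (hB : 0 < B) : lamCrit a γ A B (Tab a γ A B) = Lam a γ A B := by
  have hγ2' : γ - 2 ≠ 0 := by linarith
  have hγ4' : 0 < 4 - γ := by linarith
  set p := 2 / (γ - 2) with hp
  set K := 2 * a * A / ((4 - γ) * B) with hK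
  have hK0 : 0 < K := by positivity
  have hTK : Tab a γ A B ^ (γ - 2) = K := Tab_rpow_sub_two ha hγ2 hγ4 hA hB
  have hT2 : Tab a γ A B ^ 2 = K ^ p := by
    rw [← hTK, ← Real.rpow_mul (Tab_pos ha hγ4 hA hB).le, mul_div_cancel₀ _ hγ2', Real.rpow_two]
  have hKp : K ^ p * (((4 - γ) / (2 * a)) ^ p * B ^ p * A ^ (-p)) = 1 := by
    rw [Real.rpow_neg hA.le, ← Real.inv_rpow hA.le, ← Real.mul_rpow (by positivity) hB.le,
      ← Real.mul_rpow (by positivity) (by positivity), ← Real.mul_rpow hK0.le (by positivity),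
      show K * ((4 - γ) / (2 * a) * B * A⁻¹) = 1 by rw [hK]; field_simp, Real.one_rpow]
  have hA_exp : A ^ (-(γ / (γ - 2))) = A⁻¹ * A ^ (-p) := by
    rw [← Real.rpow_neg_one, ← Real.rpow_add hA, hp]
    congr 1
    field_simp
    ring
  have hBK : B * K - a * A = a * A * ((γ - 2) / (4 - γ)) := by
    rw [hK]; field_simp; ring
  rw [lamCrit, hTK, hT2, hBK, Lam, Cag, ← hp, hA_exp,
    show a * A * ((γ - 2) / (4 - γ)) / (A ^ 2 * K ^ p) =
      a * ((γ - 2) / (4 - γ)) * A⁻¹ * (K ^ p)⁻¹ by field_simp,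
    ← eq_inv_of_mul_eq_one_right hKp]
  ring

theorem critical_points_psi {a γ A B lam t₁ t₂ : ℝ} (ha : 0 < a) (hγ2 : 2 < γ) (hγ4 : γ < 4)
    (hA : 0 < A) (hB : 0 < B) (ht₁ : 0 < t₁) (h₁₂ : t₁ < t₂)
    (hd₁ : deriv (psi a γ A B lam) t₁ = 0) (hd₂ : deriv (psi a γ A B lam) t₂ = 0) :
    (t₁ ∈ Ioo 0 (Tab a γ A B) ∧ lamCrit a γ A B t₁ = lam) ∧
      (t₂ ∈ Ioi (Tab a γ A B) ∧ lamCrit a γ A B t₂ = lam) := by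
  have hγ : γ ≠ 0 := by linarith
  rw [deriv_psi_eq_zero_iff a A B lam hγ hA.ne' ht₁] at hd₁
  rw [deriv_psi_eq_zero_iff a A B lam hγ hA.ne' (ht₁.trans h₁₂)] at hd₂
  have h₁T : t₁ < Tab a γ A B := by
    by_contra! h
    exact h₁₂.ne ((lamCrit_strictAntiOn ha hγ2 hγ4 hA hB).injOn h (h.trans h₁₂.le)
      (hd₁.trans hd₂.symm))
  have hT₂ : Tab a γ A B < t₂ := by
    by_contra! h
    exact h₁₂.ne ((lamCrit_strictMonoOn ha hγ2 hγ4 hA hB).injOn ⟨ht₁, h₁₂.le.trans h⟩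
      ⟨ht₁.trans h₁₂, h⟩ (hd₁.trans hd₂.symm))
  exact ⟨⟨⟨ht₁, h₁T⟩, hd₁⟩, hT₂, hd₂⟩

/-- the maps `λ ↦ t⁻(λ)` and `λ ↦ t⁺(λ)` are continuous on
`(0, Λ(A,B))`, and both tend to `T(A,B)` as `λ ↑ Λ(A,B)`. -/
theorem stmt_15 (a γ A B : ℝ) (ha : 0 < a) (hγ2 : 2 < γ) (hγ4 : γ < 4)
    (hA : 0 < A) (hB : 0 < B) (tminus tplus : ℝ → ℝ)
    (h : ∀ lam : ℝ, 0 < lam → lam < Lam a γ A B →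
      0 < tminus lam ∧ tminus lam < tplus lam ∧
      deriv (psi a γ A B lam) (tminus lam) = 0 ∧
      deriv (psi a γ A B lam) (tplus lam) = 0 ∧
      ∀ t : ℝ, 0 < t → deriv (psi a γ A B lam) t = 0 →
        t = tminus lam ∨ t = tplus lam) :
    ContinuousOn tminus (Set.Ioo 0 (Lam a γ A B)) ∧
    ContinuousOn tplus (Set.Ioo 0 (Lam a γ A B)) ∧
    Filter.Tendsto tminus (nhdsWithin (Lam a γ A B) (Set.Ioo 0 (Lam a γ A B)))
      (nhds (Tab a γ A B)) ∧
    Filter.Tendsto tplus (nhdsWithin (Lam a γ A B) (Set.Ioo 0 (Lam a γ A B)))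
      (nhds (Tab a γ A B)) := by
  have hT := Tab_pos ha hγ4 hA hB
  have hmono := lamCrit_strictMonoOn ha hγ2 hγ4 hA hB
  have hanti := lamCrit_strictAntiOn ha hγ2 hγ4 hA hB
  have hΛ := lamCrit_Tab ha hγ2 hγ4 hA hB
  have hcrit := fun μ (hμ : μ ∈ Ioo 0 (Lam a γ A B)) =>
    let ⟨hm0, hmp, hdm, hdp, _⟩ := h μ hμ.1 hμ.2
    critical_points_psi ha hγ2 hγ4 hA hB hm0 hmp hdm hdp
  have hminus : ∀ μ ∈ Ioo 0 (Lam a γ A B), tminus μ ∈ Ioc 0 (Tab a γ A B) ∧ _ :=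
    fun μ hμ => ⟨Ioo_subset_Ioc_self (hcrit μ hμ).1.1, (hcrit μ hμ).1.2⟩
  have hplus : ∀ μ ∈ Ioo 0 (Lam a γ A B), tplus μ ∈ Ici (Tab a γ A B) ∧ _ :=
    fun μ hμ => ⟨mem_Ici_of_Ioi (hcrit μ hμ).2.1, (hcrit μ hμ).2.2⟩
  refine ⟨fun μ hμ => ?_, fun μ hμ => ?_, ?_, ?_⟩
  · obtain ⟨⟨hm0, hmT⟩, -⟩ := (hcrit μ hμ).1
    exact hmono.continuousWithinAt_of_rightInvOn ordConnected_Ioc hminus hμ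
      ⟨tminus μ / 2, ⟨by positivity, by linarith⟩, by linarith⟩ ⟨_, ⟨hT, le_rfl⟩, hmT⟩
  · have hTp : Tab a γ A B < tplus μ := (hcrit μ hμ).2.1
    exact hanti.continuousWithinAt_of_rightInvOn ordConnected_Ici hplus hμ
      ⟨_, self_mem_Ici, hTp⟩ ⟨tplus μ + 1, mem_Ici.2 (by linarith), by linarith⟩
  · exact hΛ ▸ hmono.tendsto_rightInvOn_of_isGreatest ordConnected_Ioc hminus (isGreatest_Ioc hT)
      ⟨Tab a γ A B / 2, ⟨by positivity, by linarith⟩, by linarith⟩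
  · exact hΛ ▸ hanti.tendsto_rightInvOn_of_isLeast ordConnected_Ici hplus isLeast_Ici
      ⟨Tab a γ A B + 1, mem_Ici.2 (by linarith), by linarith⟩
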